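/- For every τ ∈ (0,1) and every s ∈ ℝ, 1/ψ'(s) ≤ (4/τ²)·((|χ̃(s)|/τ) + 1)^{2(1+τ)/(1−τ)}, where ψ'(s) = 1/((1+ln(1+|s|))²(1+|s|)) and χ̃(s) = ∫₀^s √(ψ'(t)) dt. -/

import Mathlib

/-- The derivative ψ'(s) = 1/((1+ln(1+|s|))²(1+|s|)). -/
noncomputable def psi' (s : ℝ) : ℝ :=
  1 / ((1 + Real.log (1 + |s|)) ^ 2 * (1 + |s|))

/-- χ̃(s) = ∫₀^s √(ψ'(t)) dt. -/
noncomputable def chit (s : ℝ) : ℝ :=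
  ∫ t in (0:ℝ)..s, Real.sqrt (psi' t)

/-!
With `x = 1 + |s|`, the elementary bound `1 + log x ≤ x ^ c / c` for `0 < c ≤ 1` (which is
`log y ≤ y - 1` at `y = x ^ c`) taken at `c = τ / 2` gives `1 / ψ'(s) ≤ (4 / τ²) x ^ (1 + τ)`,
equivalently `√ψ'(t) ≥ (τ / 2) (1 + |t|) ^ (-(1 + τ) / 2)`. Integrating the latter yields
`|χ̃(s)| ≥ τ (x ^ ((1 - τ) / 2) - 1)`, and raising `x ^ ((1 - τ) / 2) ≤ |χ̃(s)| / τ + 1` to the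
power `2 (1 + τ) / (1 - τ)` recovers `x ^ (1 + τ)`.
-/

open Real

lemma one_add_log_le_rpow_div {c x : ℝ} (hc : 0 < c) (hc1 : c ≤ 1) (hx : 0 < x) :
    1 + log x ≤ x ^ c / c := by
  have h : c * log x ≤ x ^ c - 1 := by
    simpa [log_rpow hx] using log_le_sub_one_of_pos (rpow_pos_of_pos hx c)
  rw [le_div_iff₀ hc]
  nlinarith

lemma psi'_neg (t : ℝ) : psi' (-t) = psi' t := by simp [psi']

lemma chit_neg (s : ℝ) : chit (-s) = -chit s := by
  have h := intervalIntegral.integral_comp_neg (fun t => √(psi' t)) (a := s) (b := 0)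
  simp only [neg_zero, psi'_neg] at h
  rw [chit, ← h, intervalIntegral.integral_symm, chit]

lemma chit_abs_le_abs_chit (s : ℝ) : chit |s| ≤ |chit s| := by
  rcases abs_choice s with h | h <;> rw [h]
  · exact le_abs_self _
  · exact chit_neg s ▸ neg_le_abs _

lemma continuous_psi' : Continuous psi' := by
  refine continuous_const.div (by fun_prop (disch := intro t; positivity)) fun t => ?_
  have := log_nonneg (by simp : (1:ℝ) ≤ 1 + |t|)
  positivity

lemma one_div_psi'_le {τ : ℝ} (hτ : 0 < τ) (hτ2 : τ ≤ 2) (s : ℝ) :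
    1 / psi' s ≤ 4 / τ ^ 2 * (1 + |s|) ^ (1 + τ) := by
  set x := 1 + |s|
  have hx : 0 < x := by positivity
  have hlog : 0 ≤ 1 + log x := by linarith [log_nonneg (by simp [x] : (1:ℝ) ≤ x)]
  have hbound := one_add_log_le_rpow_div (half_pos hτ) (by linarith) hx
  calc 1 / psi' s = (1 + log x) ^ 2 * x := by rw [psi', one_div_one_div]
    _ ≤ (x ^ (τ / 2) / (τ / 2)) ^ 2 * x := by gcongr
    _ = 4 / τ ^ 2 * (1 + |s|) ^ (1 + τ) := by
      rw [div_pow, ← rpow_natCast, ← rpow_mul hx.le, rpow_add hx, rpow_one]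
      field_simp
      ring_nf

lemma rpow_le_sqrt_psi' {τ : ℝ} (hτ : 0 < τ) (hτ2 : τ ≤ 2) (t : ℝ) :
    τ / 2 * (1 + |t|) ^ (-(1 + τ) / 2) ≤ √(psi' t) := by
  have hx : 0 < 1 + |t| := by positivity
  have hψ : 0 < psi' t := by
    have := log_nonneg (by simp : (1:ℝ) ≤ 1 + |t|)
    unfold psi'; positivity
  apply le_sqrt_of_sq_le
  calc (τ / 2 * (1 + |t|) ^ (-(1 + τ) / 2)) ^ 2 = 1 / (4 / τ ^ 2 * (1 + |t|) ^ (1 + τ)) := by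
        rw [mul_pow, ← rpow_mul_natCast hx.le, Nat.cast_ofNat,
          show -(1 + τ) / 2 * 2 = -(1 + τ) by ring, rpow_neg hx.le]
        field_simp
        norm_num
    _ ≤ psi' t := (one_div_le hψ (by positivity)).mp (one_div_psi'_le hτ hτ2 t)

lemma integral_one_add_rpow {r u : ℝ} (hr : r ≠ -1) (hu : -1 < u) :
    ∫ t in (0:ℝ)..u, (1 + t) ^ r = ((1 + u) ^ (r + 1) - 1) / (r + 1) := by
  have h := intervalIntegral.integral_comp_add_left (fun x : ℝ => x ^ r) 1 (a := 0) (b := u)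
  simp only [add_zero] at h
  rw [h, integral_rpow (Or.inr ⟨hr, ?_⟩), one_rpow]
  rw [Set.mem_uIcc]
  rintro (h0 | h0) <;> linarith [h0.1]

lemma mul_rpow_sub_one_le_chit {τ : ℝ} (hτ : 0 < τ) (hτ1 : τ < 1) {u : ℝ} (hu : 0 ≤ u) :
    τ / (1 - τ) * ((1 + u) ^ ((1 - τ) / 2) - 1) ≤ chit u := by
  have hint : ∫ t in (0:ℝ)..u, τ / 2 * (1 + t) ^ (-(1 + τ) / 2)
      = τ / (1 - τ) * ((1 + u) ^ ((1 - τ) / 2) - 1) := by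
    rw [intervalIntegral.integral_const_mul, integral_one_add_rpow (by linarith) (by linarith),
      show -(1 + τ) / 2 + 1 = (1 - τ) / 2 by ring]
    field_simp
  rw [← hint, chit]
  refine intervalIntegral.integral_mono_on hu ?_
    (continuous_psi'.sqrt.intervalIntegrable _ _) fun t ht => ?_
  · refine (ContinuousOn.intervalIntegrable ?_).const_mul _
    refine (continuousOn_const.add continuousOn_id).rpow_const fun t ht => Or.inl ?_
    rw [Set.uIcc_of_le hu] at ht
    simp only [Pi.add_apply, id]
    linarith [ht.1]
  · simpa [abs_of_nonneg ht.1] using rpow_le_sqrt_psi' hτ (by linarith) t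

lemma rpow_le_abs_chit_div_add_one {τ : ℝ} (hτ : 0 < τ) (hτ1 : τ < 1) (s : ℝ) :
    (1 + |s|) ^ ((1 - τ) / 2) ≤ |chit s| / τ + 1 := by
  have hF : 0 ≤ (1 + |s|) ^ ((1 - τ) / 2) - 1 := by
    linarith [one_le_rpow (by simp : (1:ℝ) ≤ 1 + |s|) (by linarith : 0 ≤ (1 - τ) / 2)]
  have hτ' : τ ≤ τ / (1 - τ) := le_div_self hτ.le (by linarith) (by linarith)
  have h := (mul_le_mul_of_nonneg_right hτ' hF).trans
    ((mul_rpow_sub_one_le_chit hτ hτ1 (abs_nonneg s)).trans (chit_abs_le_abs_chit s))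
  rw [← sub_le_iff_le_add, le_div_iff₀ hτ]
  linarith

theorem stmt_11 (τ : ℝ) (hτ : τ ∈ Set.Ioo (0 : ℝ) 1) (s : ℝ) :
    1 / psi' s ≤ 4 / τ ^ 2 * (|chit s| / τ + 1) ^ (2 * (1 + τ) / (1 - τ)) := by
  obtain ⟨hτ0, hτ1⟩ := hτ
  have hx : 0 ≤ 1 + |s| := by positivity
  calc 1 / psi' s ≤ 4 / τ ^ 2 * (1 + |s|) ^ (1 + τ) := one_div_psi'_le hτ0 (by linarith) s
    _ = 4 / τ ^ 2 * ((1 + |s|) ^ ((1 - τ) / 2)) ^ (2 * (1 + τ) / (1 - τ)) := by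
      rw [← rpow_mul hx]
      congr 2
      field_simp [(by linarith : (1:ℝ) - τ ≠ 0)]
    _ ≤ 4 / τ ^ 2 * (|chit s| / τ + 1) ^ (2 * (1 + τ) / (1 - τ)) := by
      gcongr
      exact rpow_le_abs_chit_div_add_one hτ0 hτ1 s
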